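/- arXiv:1506.09061 — 7 statements merged into one kernel-verified Lean document; each statement's English description precedes it below -/
import Mathlib

section
/- Let p, q, r, x be points in the plane forming a convex quadrilateral (p, r, x, q) in this cyclic order. If there exists a disk whose boundary passes through p and x that contains neither r nor q, then x lies strictly inside the circle through p, r, and q. -/
open Real EuclideanGeometry

/-- If p, r, x, q form a convex quadrilateral in this cyclic order
(equivalently, the diagonals (p,x) and (r,q) cross), and there is a disk whose boundary
passes through p and x containing neither r nor q, then x lies strictly inside the
circle through p, r and q (given by its center o and radius R). -/
theorem delaunay_edge_inside_circle
    (p q r x o : EuclideanSpace ℝ (Fin 2)) (R : ℝ)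
    (hncol : ¬ Collinear ℝ ({p, r, q} : Set (EuclideanSpace ℝ (Fin 2))))
    (hquad : ∃ m, m ∈ openSegment ℝ p x ∧ m ∈ openSegment ℝ r q)
    (hdisk : ∃ (c : EuclideanSpace ℝ (Fin 2)) (ρ : ℝ),
      dist c p = ρ ∧ dist c x = ρ ∧ ρ < dist c r ∧ ρ < dist c q)
    (hop : dist o p = R) (hor : dist o r = R) (hoq : dist o q = R) :
    dist o x < R := by
  obtain ⟨m, hm1, hm2⟩ := hquad
  obtain ⟨c, ρ, hcp, hcx, hcr, hcq⟩ := hdisk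
  set f : EuclideanSpace ℝ (Fin 2) → ℝ :=
    fun y => dist o y ^ 2 - dist c y ^ 2 - (R ^ 2 - ρ ^ 2) with hf
  have expand : ∀ y : EuclideanSpace ℝ (Fin 2),
      dist o y ^ 2 - dist c y ^ 2
        = ‖o‖ ^ 2 - ‖c‖ ^ 2 - 2 * inner ℝ (o - c) y := by
    intro y
    rw [dist_eq_norm, dist_eq_norm, ← real_inner_self_eq_norm_sq,
      ← real_inner_self_eq_norm_sq, ← real_inner_self_eq_norm_sq,
      ← real_inner_self_eq_norm_sq]
    simp only [inner_sub_left, inner_sub_right]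
    rw [real_inner_comm o y, real_inner_comm c y]
    ring
  have key : ∀ (a b : ℝ) (u v : EuclideanSpace ℝ (Fin 2)), a + b = 1 →
      f (a • u + b • v) = a * f u + b * f v := by
    intro a b u v hab
    simp only [hf, expand, inner_add_right, real_inner_smul_right]
    nlinarith [hab]
  have hfp : f p = 0 := by simp [hf, hop, hcp]
  have hρ : 0 ≤ ρ := hcp ▸ dist_nonneg
  have hfr : f r < 0 := by
    simp only [hf, hor]
    nlinarith [hcr]
  have hfq : f q < 0 := by
    simp only [hf, hoq]
    nlinarith [hcq]
  obtain ⟨a, b, ha, hb, hab, hm⟩ := hm1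
  obtain ⟨a', b', ha', hb', hab', hm'⟩ := hm2
  have hfm : f m < 0 := by
    rw [← hm', key a' b' r q hab']
    nlinarith [hfr, hfq]
  have hfx : f x < 0 := by
    rw [← hm, key a b p x hab, hfp] at hfm
    nlinarith [hfm]
  have hRpos : 0 ≤ R := hop ▸ dist_nonneg
  have : dist o x ^ 2 < R ^ 2 := by
    simp only [hf, hcx] at hfx; nlinarith [hfx]
  exact lt_of_pow_lt_pow_left₀ 2 hRpos this
end

section
/- Let p, r, q, x be points such that r, q, x all lie in a cone of angular width π/3 with apex p, and x lies inside or on the circle through p, r, and q. Then the angle ∠(rxq) is at least π − ∠(rpq), and in particular ∠(rxq) > 2π/3. -/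
open Real EuclideanGeometry


noncomputable section

instance factFinrankE2 : Fact (Module.finrank ℝ (EuclideanSpace ℝ (Fin 2)) = 2) :=
  ⟨finrank_euclideanSpace_fin⟩

instance orientedE2 : Module.Oriented ℝ (EuclideanSpace ℝ (Fin 2)) (Fin 2) :=
  ⟨(EuclideanSpace.basisFun (Fin 2) ℝ).toBasis.orientation⟩

theorem key_inscribed (s : EuclideanGeometry.Sphere (EuclideanSpace ℝ (Fin 2)))
    (p r q y : EuclideanSpace ℝ (Fin 2))
    (hp : p ∈ s) (hr : r ∈ s) (hq : q ∈ s) (hy : y ∈ s)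
    (hncol : ¬ Collinear ℝ ({p, r, q} : Set (EuclideanSpace ℝ (Fin 2))))
    (hside : (affineSpan ℝ ({r, q} : Set (EuclideanSpace ℝ (Fin 2)))).SOppSide y p) :
    ∠ r y q = π - ∠ r p q := by
  have hrs : r ∈ affineSpan ℝ ({r, q} : Set (EuclideanSpace ℝ (Fin 2))) :=
    mem_affineSpan ℝ (by simp)
  have hqs : q ∈ affineSpan ℝ ({r, q} : Set (EuclideanSpace ℝ (Fin 2))) :=
    mem_affineSpan ℝ (by simp)
  have hyn := hside.left_notMem
  have hpn := hside.right_notMem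
  have hpr : p ≠ r := fun h => hpn (h ▸ hrs)
  have hpq : p ≠ q := fun h => hpn (h ▸ hqs)
  have hyr : y ≠ r := fun h => hyn (h ▸ hrs)
  have hyq : y ≠ q := fun h => hyn (h ▸ hqs)
  have h2 : (2 : ℤ) • ∡ r p q = (2 : ℤ) • ∡ r y q :=
    Sphere.two_zsmul_oangle_eq hr hp hy hq hpr hpq hyr hyq
  have hsign : (∡ r p q).sign = -(∡ r y q).sign :=
    AffineSubspace.SOppSide.oangle_sign_eq_neg hrs hqs hside
  have hncol' : ¬ Collinear ℝ ({r, p, q} : Set (EuclideanSpace ℝ (Fin 2))) := by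
    rwa [Set.insert_comm] at hncol
  have hs0 : (∡ r p q).sign ≠ 0 :=
    fun h => hncol' (oangle_sign_eq_zero_iff_collinear.1 h)
  rcases Real.Angle.two_zsmul_eq_iff.1 h2 with heq | hpi
  · exfalso
    rw [← heq] at hsign
    cases hsgn : (∡ r p q).sign <;> rw [hsgn] at hsign hs0 <;> simp at hsign hs0
  · have hyeq : ∡ r y q = ∡ r p q + ↑π := by
      rw [hpi, add_assoc, Real.Angle.coe_pi_add_coe_pi, add_zero]
    set a := ∠ r p q with ha
    have ha0 : 0 ≤ a := angle_nonneg _ _ _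
    have hale : a ≤ π := angle_le_pi _ _ _
    have hane0 : a ≠ 0 := fun h => hncol' (collinear_of_angle_eq_zero h)
    have hanepi : a ≠ π := fun h => hncol' (collinear_of_angle_eq_pi h)
    have hapos : 0 < a := lt_of_le_of_ne ha0 (Ne.symm hane0)
    have haltpi : a < π := lt_of_le_of_ne hale hanepi
    have habs : ∠ r y q = |(∡ r y q).toReal| :=
      angle_eq_abs_oangle_toReal hyr.symm hyq.symm
    cases hsgn : (∡ r p q).sign with
    | zero => exact absurd hsgn hs0
    | pos =>
        have h1 : ∡ r p q = ↑a := oangle_eq_angle_of_sign_eq_one hsgn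
        have h3 : ∡ r y q = ((a + π : ℝ) : Real.Angle) := by
          rw [hyeq, h1, Real.Angle.coe_add]
        have h4 : (∡ r y q).toReal = a + π - 2 * π := by
          rw [h3, Real.Angle.toReal_coe_eq_self_sub_two_pi_iff.2 ⟨by linarith, by linarith⟩]
        rw [habs, h4, abs_of_nonpos (by linarith)]
        ring
    | neg =>
        have h1 : ∡ r p q = -↑a := oangle_eq_neg_angle_of_sign_eq_neg_one hsgn
        have h3 : ∡ r y q = ((π - a : ℝ) : Real.Angle) := by
          rw [hyeq, h1, sub_eq_add_neg, Real.Angle.coe_add, Real.Angle.coe_neg, add_comm]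
        have h4 : (∡ r y q).toReal = π - a := by
          rw [h3, Real.Angle.toReal_coe_eq_self_iff.2 ⟨by linarith, by linarith⟩]
        rw [habs, h4, abs_of_nonneg (by linarith)]

/-- If r, q, x all lie in a cone of angular width π/3 with apex p
(so in particular the pairwise angles at p are less than π/3), x lies inside or on the
circle through p, r, q (center o, radius R), and x is on the opposite side of the chord
(r,q) from p, then ∠(r x q) ≥ π − ∠(r p q) > 2π/3. -/
theorem angle_at_inner_vertex
    (p r q x o : EuclideanSpace ℝ (Fin 2)) (R : ℝ)
    (hncol : ¬ Collinear ℝ ({p, r, q} : Set (EuclideanSpace ℝ (Fin 2))))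
    (hrq : ∠ r p q < π / 3) (hrx : ∠ r p x < π / 3) (hxq : ∠ x p q < π / 3)
    (hop : dist o p = R) (hor : dist o r = R) (hoq : dist o q = R)
    (hx : dist o x ≤ R)
    (hside : (affineSpan ℝ ({r, q} : Set (EuclideanSpace ℝ (Fin 2)))).SOppSide x p) :
    π - ∠ r p q ≤ ∠ r x q ∧ 2 * π / 3 < ∠ r x q := by
  set s : EuclideanGeometry.Sphere (EuclideanSpace ℝ (Fin 2)) := ⟨o, R⟩ with hs
  have hp : p ∈ s := by simpa [s, EuclideanGeometry.mem_sphere, dist_comm] using hop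
  have hr : r ∈ s := by simpa [s, EuclideanGeometry.mem_sphere, dist_comm] using hor
  have hq : q ∈ s := by simpa [s, EuclideanGeometry.mem_sphere, dist_comm] using hoq
  have hrs : r ∈ affineSpan ℝ ({r, q} : Set (EuclideanSpace ℝ (Fin 2))) :=
    mem_affineSpan ℝ (by simp)
  have hqs : q ∈ affineSpan ℝ ({r, q} : Set (EuclideanSpace ℝ (Fin 2))) :=
    mem_affineSpan ℝ (by simp)
  have hxn := hside.left_notMem
  have hxr : x ≠ r := fun h => hxn (h ▸ hrs)
  have hxq' : x ≠ q := fun h => hxn (h ▸ hqs)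
  have hmain : π - ∠ r p q ≤ ∠ r x q := by
    rcases eq_or_lt_of_le hx with hxeq | hxlt
    · -- x on the sphere
      have hxmem : x ∈ s := by
        simp [s, EuclideanGeometry.mem_sphere, dist_comm, hxeq.symm]
      exact le_of_eq (key_inscribed s p r q x hp hr hq hxmem hncol hside).symm
    · -- x strictly inside
      have hxd : dist x s.center < s.radius := by simpa [s, dist_comm] using hxlt
      have hsbtw : Sbtw ℝ r x (s.secondInter r (x -ᵥ r)) :=
        EuclideanGeometry.Sphere.sbtw_secondInter hr hxd
      set y := s.secondInter r (x -ᵥ r) with hy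
      have hymem : y ∈ s := (EuclideanGeometry.Sphere.secondInter_mem _).2 hr
      have hxy : x ≠ y := hsbtw.ne_right
      have hyn : y ∉ affineSpan ℝ ({r, q} : Set (EuclideanSpace ℝ (Fin 2))) := by
        intro hmem
        apply hxn
        have hxline : x ∈ line[ℝ, r, y] := hsbtw.wbtw.mem_affineSpan
        have hle : line[ℝ, r, y] ≤ affineSpan ℝ ({r, q} : Set (EuclideanSpace ℝ (Fin 2))) := by
          apply affineSpan_le.2
          rintro z (rfl | rfl) <;> assumption
        exact hle hxline
      have hyside : (affineSpan ℝ ({r, q} : Set (EuclideanSpace ℝ (Fin 2)))).SOppSide y p :=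
        ⟨((hsbtw.wbtw.wSameSide₂₃ hrs).symm).trans_sOppSide hside, hyn, hside.right_notMem⟩
      have hyr : y ≠ r := fun h => hyn (h ▸ hrs)
      have hyq : y ≠ q := fun h => hyn (h ▸ hqs)
      have hkey : ∠ r y q = π - ∠ r p q := key_inscribed s p r q y hp hr hq hymem hncol hyside
      -- ∠ x y q = ∠ r y q
      have hsr : SameRay ℝ (r -ᵥ y) (x -ᵥ y) := by
        have := hsbtw.wbtw.sameRay_vsub_right
        have h2 := this.neg
        simpa [neg_vsub_eq_vsub_rev] using h2
      obtain ⟨c, hc, hceq⟩ := hsr.exists_pos_left (vsub_ne_zero.2 (hyr.symm : r ≠ y))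
        (vsub_ne_zero.2 hxy)
      have hxyq : ∠ x y q = ∠ r y q := by
        rw [EuclideanGeometry.angle, EuclideanGeometry.angle, ← hceq,
          InnerProductGeometry.angle_smul_left_of_pos _ _ hc]
      -- exterior angle
      have hpi : ∠ r x y = π := hsbtw.angle₁₂₃_eq_pi
      have hext : ∠ q x r + ∠ q x y = π := angle_add_angle_eq_pi_of_angle_eq_pi q hpi
      have htri : ∠ q x y + ∠ x y q + ∠ y q x = π :=
        angle_add_angle_add_angle_eq_pi y hxq'
      have h1 : ∠ r x q = ∠ q x r := angle_comm _ _ _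
      have h2 : 0 ≤ ∠ y q x := angle_nonneg _ _ _
      rw [h1]
      rw [hxyq, hkey] at htri
      linarith
  refine ⟨hmain, ?_⟩
  have : 2 * π / 3 < π - ∠ r p q := by
    have h0 : 0 ≤ ∠ r p q := angle_nonneg _ _ _
    linarith
  linarith
end
end

section
/- Partition the plane around each point into 6 cones of angular width π/3 by rays from that point, with the same orientation at every point. Let p, p', s be the vertices of a triangle such that p' and s both lie in the same cone C of p, and p and s both lie in the cone of p' opposite to C (the cone C₃ obtained by rotating C by π). Then ∠(p's p) > 2π/3; consequently p and p' cannot both lie in a single cone of angular width π/3 with apex s. -/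
open Real EuclideanGeometry

lemma abs_toReal_add_le (θ ψ : Real.Angle) :
    |(θ + ψ).toReal| ≤ |θ.toReal| + |ψ.toReal| := by
  set a := θ.toReal with ha
  set b := ψ.toReal with hb
  have haI := θ.toReal_mem_Ioc
  have hbI := ψ.toReal_mem_Ioc
  obtain ⟨ha1, ha2⟩ := haI
  obtain ⟨hb1, hb2⟩ := hbI
  have hsum : θ + ψ = ((a + b : ℝ) : Real.Angle) := by
    rw [Real.Angle.coe_add, ha, hb, θ.coe_toReal, ψ.coe_toReal]
  rw [hsum]
  rcases le_or_gt (a + b) π with h1 | h1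
  · rcases lt_or_ge (-π) (a + b) with h2 | h2
    · rw [Real.Angle.toReal_coe_eq_self_iff.2 ⟨h2, h1⟩]
      exact abs_add_le a b
    · have : ((a + b : ℝ) : Real.Angle).toReal = a + b + 2 * π :=
        Real.Angle.toReal_coe_eq_self_add_two_pi_iff.2 ⟨by linarith, h2⟩
      rw [this]
      have hpi := Real.pi_pos
      have hane : a < 0 := by linarith
      have hbne : b < 0 := by linarith
      rw [abs_of_nonneg (by linarith), abs_of_neg hane, abs_of_neg hbne]
      linarith
  · have : ((a + b : ℝ) : Real.Angle).toReal = a + b - 2 * π :=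
      Real.Angle.toReal_coe_eq_self_sub_two_pi_iff.2 ⟨h1, by linarith⟩
    rw [this]
    have hpi := Real.pi_pos
    have hap : 0 < a := by linarith
    have hbp : 0 < b := by linarith
    rw [abs_of_nonpos (by linarith), abs_of_pos hap, abs_of_pos hbp]
    linarith

lemma angle_triangle_2d {V : Type*} [NormedAddCommGroup V] [InnerProductSpace ℝ V]
    [Fact (Module.finrank ℝ V = 2)] (o : Orientation ℝ V (Fin 2))
    {x y z : V} (hx : x ≠ 0) (hy : y ≠ 0) (hz : z ≠ 0) :
    InnerProductGeometry.angle x z ≤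
      InnerProductGeometry.angle x y + InnerProductGeometry.angle y z := by
  rw [o.angle_eq_abs_oangle_toReal hx hz, o.angle_eq_abs_oangle_toReal hx hy,
    o.angle_eq_abs_oangle_toReal hy hz, ← o.oangle_add hx hy hz]
  exact abs_toReal_add_le _ _

/-- A point `pt` lies in the open cone of apex `apex`, angular width π/3, whose
bisector points in direction `u`. -/
def InConeDir (u apex pt : EuclideanSpace ℝ (Fin 2)) : Prop :=
  pt ≠ apex ∧ InnerProductGeometry.angle (pt - apex) u < π / 6

/-- If p' and s lie in the cone of p with bisector direction u (width π/3),
and p and s lie in the opposite cone of p' (bisector −u), then ∠(p' s p) > 2π/3; consequently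
p and p' cannot both lie in a single cone of angular width π/3 with apex s. -/
theorem shared_triangle_angle
    (u p p' s : EuclideanSpace ℝ (Fin 2))
    (hncol : ¬ Collinear ℝ ({p, p', s} : Set (EuclideanSpace ℝ (Fin 2))))
    (hp' : InConeDir u p p') (hs : InConeDir u p s)
    (hp : InConeDir (-u) p' p) (hs' : InConeDir (-u) p' s) :
    2 * π / 3 < ∠ p' s p ∧
      ∀ v : EuclideanSpace ℝ (Fin 2),
        ¬ (InnerProductGeometry.angle (p - s) v < π / 6 ∧
           InnerProductGeometry.angle (p' - s) v < π / 6) := by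
  haveI : Fact (Module.finrank ℝ (EuclideanSpace ℝ (Fin 2)) = 2) :=
    ⟨finrank_euclideanSpace_fin⟩
  set o : Orientation ℝ (EuclideanSpace ℝ (Fin 2)) (Fin 2) :=
    (EuclideanSpace.basisFun (Fin 2) ℝ).toBasis.orientation
  have hpi := Real.pi_pos
  have ha : p - s ≠ 0 := sub_ne_zero.2 fun h => hs.1 h.symm
  have hb : p' - s ≠ 0 := sub_ne_zero.2 fun h => hs'.1 h.symm
  have hu : u ≠ 0 := by
    intro h
    have := hs.2
    rw [h, InnerProductGeometry.angle_zero_right] at this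
    linarith
  -- angle (p - s) u > 5π/6
  have h1 : π - π / 6 < InnerProductGeometry.angle (p - s) u := by
    have : InnerProductGeometry.angle (p - s) u
        = π - InnerProductGeometry.angle (s - p) u := by
      rw [← InnerProductGeometry.angle_neg_left, neg_sub]
    rw [this]
    linarith [hs.2]
  -- angle (p' - s) u < π/6
  have h2 : InnerProductGeometry.angle (p' - s) u < π / 6 := by
    have : InnerProductGeometry.angle (p' - s) u
        = InnerProductGeometry.angle (s - p') (-u) := by
      rw [← InnerProductGeometry.angle_neg_neg (s - p'), neg_sub, neg_neg]
    rw [this]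
    exact hs'.2
  have htri : InnerProductGeometry.angle (p - s) u ≤
      InnerProductGeometry.angle (p - s) (p' - s) + InnerProductGeometry.angle (p' - s) u :=
    angle_triangle_2d o ha hb hu
  have hkey : 2 * π / 3 < InnerProductGeometry.angle (p - s) (p' - s) := by
    linarith
  have hangle : ∠ p' s p = InnerProductGeometry.angle (p - s) (p' - s) := by
    rw [EuclideanGeometry.angle, InnerProductGeometry.angle_comm]
    rfl
  refine ⟨by rw [hangle]; exact hkey, ?_⟩
  rintro v ⟨hv1, hv2⟩
  have hv : v ≠ 0 := by
    intro h
    rw [h, InnerProductGeometry.angle_zero_right] at hv1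
    linarith
  have : InnerProductGeometry.angle (p - s) (p' - s) ≤
      InnerProductGeometry.angle (p - s) v + InnerProductGeometry.angle v (p' - s) :=
    angle_triangle_2d o ha hv hb
  rw [InnerProductGeometry.angle_comm v (p' - s)] at this
  linarith
end

section
/- Partition the plane around each point into 6 equally oriented cones of angular width π/3. In a Delaunay triangulation of a point set P in general position, let (p, p') be an edge with p' in cone C₀ of p and p in cone C₃ of p', and let s and q be the two vertices forming triangles with edge (p, p') on either side. Then s and q cannot both lie in C₀^p ∩ C₃^{p'}. -/
open Real EuclideanGeometry

section Aux

variable {V : Type*} [NormedAddCommGroup V] [InnerProductSpace ℝ V]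

/-- From an angle bound of π/6, extract an inner-product bound. -/
lemma aux_cone_inner {u v : V} (h : InnerProductGeometry.angle v u < π / 6) :
    Real.sqrt 3 / 2 * (‖v‖ * ‖u‖) < (inner ℝ v u : ℝ) := by
  have h0 := InnerProductGeometry.angle_nonneg v u
  have hpi : π / 6 ≤ π := by linarith [Real.pi_pos]
  have hcos : Real.cos (π / 6) < Real.cos (InnerProductGeometry.angle v u) :=
    Real.cos_lt_cos_of_nonneg_of_le_pi h0 hpi h
  rw [Real.cos_pi_div_six] at hcos
  have hmul := InnerProductGeometry.cos_angle_mul_norm_mul_norm v u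
  have hv : v ≠ 0 := by
    rintro rfl
    rw [InnerProductGeometry.angle_zero_left] at h
    linarith [Real.pi_pos]
  have hu : u ≠ 0 := by
    rintro rfl
    rw [InnerProductGeometry.angle_zero_right] at h
    linarith [Real.pi_pos]
  have hvn : 0 < ‖v‖ := norm_pos_iff.2 hv
  have hun : 0 < ‖u‖ := norm_pos_iff.2 hu
  have := mul_lt_mul_of_pos_right hcos (mul_pos hvn hun)
  rw [hmul] at this
  exact this

set_option maxHeartbeats 1600000 in
/-- Two vectors both within π/6 of a unit vector `u` have positive inner ℝ product. -/
lemma aux_inner_pos {u v w : V} (hu : ‖u‖ = 1)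
    (hv : Real.sqrt 3 / 2 * ‖v‖ < (inner ℝ v u : ℝ)) (hw : Real.sqrt 3 / 2 * ‖w‖ < (inner ℝ w u : ℝ)) :
    (0 : ℝ) < (inner ℝ v w : ℝ) := by
  obtain ⟨α, hα⟩ : ∃ a : ℝ, (inner ℝ v u : ℝ) = a := ⟨_, rfl⟩
  obtain ⟨β, hβ⟩ : ∃ a : ℝ, (inner ℝ w u : ℝ) = a := ⟨_, rfl⟩
  rw [hα] at hv
  rw [hβ] at hw
  have huu : (inner ℝ u u : ℝ) = 1 := by
    rw [real_inner_self_eq_norm_sq, hu]; norm_num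
  have huv : (inner ℝ u v : ℝ) = α := by rw [real_inner_comm]; exact hα
  have huw : (inner ℝ u w : ℝ) = β := by rw [real_inner_comm]; exact hβ
  have hvd : (inner ℝ v w : ℝ) = inner ℝ (v - α • u) (w - β • u) + α * β := by
    simp only [inner_sub_left, inner_sub_right, real_inner_smul_left,
      real_inner_smul_right, huu, huv, huw, hα, hβ]
    ring
  have hnv' : ‖v - α • u‖ ^ 2 = ‖v‖ ^ 2 - α ^ 2 := by
    rw [← real_inner_self_eq_norm_sq, ← real_inner_self_eq_norm_sq]
    simp only [inner_sub_left, inner_sub_right, real_inner_smul_left,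
      real_inner_smul_right, huu, huv, hα]
    ring
  have hnw' : ‖w - β • u‖ ^ 2 = ‖w‖ ^ 2 - β ^ 2 := by
    rw [← real_inner_self_eq_norm_sq, ← real_inner_self_eq_norm_sq]
    simp only [inner_sub_left, inner_sub_right, real_inner_smul_left,
      real_inner_smul_right, huu, huw, hβ]
    ring
  have hC : -(‖v - α • u‖ * ‖w - β • u‖) ≤ (inner ℝ (v - α • u) (w - β • u) : ℝ) :=
    neg_le_of_abs_le (abs_real_inner_le_norm _ _)
  have hs3 : Real.sqrt 3 ^ 2 = 3 := Real.sq_sqrt (by norm_num)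
  have hs3' : (1 : ℝ) ≤ Real.sqrt 3 := by nlinarith [Real.sqrt_nonneg 3]
  have hαpos : 0 < α := lt_of_le_of_lt (by positivity) hv
  have hβpos : 0 < β := lt_of_le_of_lt (by positivity) hw
  have hcv : α ≤ ‖v‖ := by
    have := real_inner_le_norm v u; rw [hu, mul_one, hα] at this; exact this
  have hcw : β ≤ ‖w‖ := by
    have := real_inner_le_norm w u; rw [hu, mul_one, hβ] at this; exact this
  have hvn : 0 < ‖v‖ := lt_of_lt_of_le hαpos hcv
  have hwn : 0 < ‖w‖ := lt_of_lt_of_le hβpos hcw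
  have htv : (Real.sqrt 3 / 2 * ‖v‖) ^ 2 = 3 / 4 * ‖v‖ ^ 2 := by
    rw [mul_pow, div_pow, hs3]; ring
  have htw : (Real.sqrt 3 / 2 * ‖w‖) ^ 2 = 3 / 4 * ‖w‖ ^ 2 := by
    rw [mul_pow, div_pow, hs3]; ring
  have hnnv : 0 ≤ Real.sqrt 3 / 2 * ‖v‖ := by positivity
  have hnnw : 0 ≤ Real.sqrt 3 / 2 * ‖w‖ := by positivity
  have ha2 : 3 / 4 * ‖v‖ ^ 2 < α ^ 2 := by
    nlinarith [mul_pos (sub_pos.2 hv) (show (0:ℝ) < α + Real.sqrt 3 / 2 * ‖v‖ by linarith), htv]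
  have hb2 : 3 / 4 * ‖w‖ ^ 2 < β ^ 2 := by
    nlinarith [mul_pos (sub_pos.2 hw) (show (0:ℝ) < β + Real.sqrt 3 / 2 * ‖w‖ by linarith), htw]
  have hv'le : ‖v - α • u‖ < ‖v‖ / 2 := by
    nlinarith [norm_nonneg (v - α • u), hnv']
  have hw'le : ‖w - β • u‖ < ‖w‖ / 2 := by
    nlinarith [norm_nonneg (w - β • u), hnw']
  have hprod : ‖v - α • u‖ * ‖w - β • u‖ < ‖v‖ / 2 * (‖w‖ / 2) :=
    mul_lt_mul'' hv'le hw'le (norm_nonneg _) (norm_nonneg _)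
  have hab : 3 / 4 * (‖v‖ * ‖w‖) < α * β := by nlinarith [mul_pos hvn hwn]
  rw [hvd]
  nlinarith [hC, hprod, hab]

lemma aux_final {a1 b1 a2 b2 a3 b3 d R r : ℝ}
    (hsq1 : (a3 - 0) ^ 2 + (b3 - 0) ^ 2 = R ^ 2)
    (hsq3 : (a3 - a1) ^ 2 + (b3 - b1) ^ 2 = R ^ 2)
    (hsq4 : R ^ 2 < (a3 - a2) ^ 2 + (b3 - b2) ^ 2)
    (hPs : (a1 - 0) * (a1 - d) + (b1 - 0) * (b1 - 0) < 0)
    (hPq : (a2 - 0) * (a2 - d) + (b2 - 0) * (b2 - 0) < 0)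
    (hsq2 : (a3 - d) ^ 2 + (b3 - 0) ^ 2 = R ^ 2)
    (hd0 : 0 < d)
    (hline : (1 - r) * b1 + r * b2 = 0)
    (hr0' : 0 < r) (hr1' : r < 1) : False := by
  have hdm : d * (d - 2 * a3) = 0 := by nlinarith [hsq1, hsq2]
  have ha3d : 2 * a3 = d := by
    rcases mul_eq_zero.1 hdm with h | h
    · exact absurd h hd0.ne'
    · linarith
  subst ha3d
  have hPs' : a1 * (a1 - 2 * a3) + b1 * b1 = 2 * b3 * b1 := by nlinarith [hsq1, hsq3]
  have hPq' : 2 * b3 * b2 < a2 * (a2 - 2 * a3) + b2 * b2 := by nlinarith [hsq1, hsq4]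
  have h1 : 2 * b3 * b1 < 0 := by
    calc 2 * b3 * b1 = a1 * (a1 - 2 * a3) + b1 * b1 := hPs'.symm
    _ < 0 := by nlinarith [hPs]
  have h2 : 2 * b3 * b2 < 0 := by
    calc 2 * b3 * b2 < a2 * (a2 - 2 * a3) + b2 * b2 := hPq'
    _ < 0 := by nlinarith [hPq]
  have hmul : 2 * b3 * ((1 - r) * b1 + r * b2) = 0 := by rw [hline]; ring
  nlinarith [hmul, mul_pos (sub_pos.2 hr1') (neg_pos.2 h1), mul_pos hr0' (neg_pos.2 h2)]

end Aux

/-- Let (p, p') be a Delaunay edge with p' in the cone of p with bisector u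
and p in the opposite cone of p', and let s and q be the two vertices forming the Delaunay
triangles on either side of (p,p') (so they lie strictly on opposite sides of the line pp',
and q is strictly outside the circumcircle of p, p', s).  Then s and q cannot both lie in
the intersection of the cone of p and the opposite cone of p'. -/
theorem no_doubly_shared_triangle
    (u p p' s q : EuclideanSpace ℝ (Fin 2))
    (hncols : ¬ Collinear ℝ ({p, p', s} : Set (EuclideanSpace ℝ (Fin 2))))
    (hncolq : ¬ Collinear ℝ ({p, p', q} : Set (EuclideanSpace ℝ (Fin 2))))
    (hp' : InConeDir u p p') (hp : InConeDir (-u) p' p)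
    (hopp : (affineSpan ℝ ({p, p'} : Set (EuclideanSpace ℝ (Fin 2)))).SOppSide s q)
    (hdel : ∀ (o : EuclideanSpace ℝ (Fin 2)) (R : ℝ),
      dist o p = R → dist o p' = R → dist o s = R → R < dist o q) :
    ¬ (InConeDir u p s ∧ InConeDir (-u) p' s ∧
       InConeDir u p q ∧ InConeDir (-u) p' q) := by
  rintro ⟨hs1, hs2, hq1, hq2⟩
  have hu : u ≠ 0 := by
    rintro rfl
    have := hp'.2
    rw [InnerProductGeometry.angle_zero_right] at this
    linarith [Real.pi_pos]
  have hun : (0 : ℝ) < ‖u‖ := norm_pos_iff.2 hu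
  set uhat : EuclideanSpace ℝ (Fin 2) := ‖u‖⁻¹ • u with huhatdef
  have huhatn : ‖uhat‖ = 1 := by
    rw [huhatdef, norm_smul, norm_inv, norm_norm, inv_mul_cancel₀ hun.ne']
  -- obtuse angle at x, for x = s and x = q
  have key : ∀ x : EuclideanSpace ℝ (Fin 2), InConeDir u p x → InConeDir (-u) p' x →
      (inner ℝ (x - p) (x - p') : ℝ) < 0 := by
    intro x h1 h2
    have ha1 : InnerProductGeometry.angle (x - p) uhat < π / 6 := by
      rw [huhatdef, InnerProductGeometry.angle_smul_right_of_pos _ _ (inv_pos.2 hun)]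
      exact h1.2
    have ha2 : InnerProductGeometry.angle (x - p') (-uhat) < π / 6 := by
      have : -uhat = ‖u‖⁻¹ • (-u) := by rw [huhatdef, smul_neg]
      rw [this, InnerProductGeometry.angle_smul_right_of_pos _ _ (inv_pos.2 hun)]
      exact h2.2
    have hb1 := aux_cone_inner ha1
    have hb2 := aux_cone_inner ha2
    rw [huhatn, mul_one] at hb1
    rw [norm_neg, huhatn, mul_one] at hb2
    have hb2' : Real.sqrt 3 / 2 * ‖p' - x‖ < (inner ℝ (p' - x) uhat : ℝ) := by
      have h1 : (inner ℝ (x - p') (-uhat) : ℝ) = inner ℝ (p' - x) uhat := by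
        rw [inner_neg_right, ← inner_neg_left]
        congr 1
        abel
      have h2 : ‖x - p'‖ = ‖p' - x‖ := norm_sub_rev _ _
      rw [h1, h2] at hb2
      exact hb2
    have := aux_inner_pos huhatn hb1 hb2'
    have heq : (inner ℝ (x - p) (x - p') : ℝ) = -(inner ℝ (x - p) (p' - x) : ℝ) := by
      rw [← inner_neg_right]
      congr 1
      abel
    rw [heq]
    linarith
  have hPs := key s hs1 hs2
  have hPq := key q hq1 hq2
  -- orthonormal basis with first vector along p' - p
  have hppne : p' ≠ p := hp'.1
  have hd : (0 : ℝ) < ‖p' - p‖ := by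
    rw [norm_pos_iff, sub_ne_zero]; exact hppne
  set d : ℝ := ‖p' - p‖ with hddef
  set e : EuclideanSpace ℝ (Fin 2) := d⁻¹ • (p' - p) with hedef
  have hen : ‖e‖ = 1 := by
    rw [hedef, norm_smul, norm_inv, Real.norm_eq_abs, abs_of_pos hd, ← hddef,
      inv_mul_cancel₀ hd.ne']
  have hcard : Module.finrank ℝ (EuclideanSpace ℝ (Fin 2)) = Fintype.card (Fin 2) := by
    simp [finrank_euclideanSpace_fin]
  have horth : Orthonormal ℝ (({0} : Set (Fin 2)).restrict ![e, e]) := by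
    constructor
    · rintro ⟨i, hi⟩
      have : i = 0 := hi
      subst this
      show ‖![e, e] 0‖ = 1
      simpa using hen
    · rintro ⟨i, hi⟩ ⟨j, hj⟩ hij
      exact absurd (Subtype.ext ((Set.eq_of_mem_singleton hi).trans
        (Set.eq_of_mem_singleton hj).symm)) hij
  obtain ⟨b, hb⟩ := horth.exists_orthonormalBasis_extension_of_card_eq hcard
  have hb0 : b 0 = e := by simpa using hb 0 rfl
  set n : EuclideanSpace ℝ (Fin 2) := b 1 with hndef
  have hen2 : (inner ℝ e n : ℝ) = 0 := by
    rw [← hb0, hndef]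
    exact b.orthonormal.2 (by norm_num)
  have hee : (inner ℝ e e : ℝ) = 1 := by
    rw [real_inner_self_eq_norm_sq, hen]; norm_num
  have hnn : (inner ℝ n n : ℝ) = 1 := by
    rw [real_inner_self_eq_norm_sq, hndef, b.orthonormal.1 1]; norm_num
  -- polarized Parseval
  have IP : ∀ v w : EuclideanSpace ℝ (Fin 2),
      (inner ℝ v w : ℝ) = inner ℝ v e * inner ℝ w e + inner ℝ v n * inner ℝ w n := by
    intro v w
    have := b.sum_inner_mul_inner v w
    rw [Fin.sum_univ_two, hb0, ← hndef] at this
    rw [← this, real_inner_comm e w, real_inner_comm n w]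
  have hpe : (inner ℝ (p' - p) e : ℝ) = d := by
    have : p' - p = d • e := by
      rw [hedef, smul_smul, mul_inv_cancel₀ hd.ne', one_smul]
    rw [this, real_inner_smul_left, hee, mul_one]
  have hpn : (inner ℝ (p' - p) n : ℝ) = 0 := by
    have : p' - p = d • e := by
      rw [hedef, smul_smul, mul_inv_cancel₀ hd.ne', one_smul]
    rw [this, real_inner_smul_left, hen2, mul_zero]
  -- coordinates relative to p
  set ξ : EuclideanSpace ℝ (Fin 2) → ℝ := fun z => inner ℝ (z - p) e with hξdef
  set η : EuclideanSpace ℝ (Fin 2) → ℝ := fun z => inner ℝ (z - p) n with hηdef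
  have coordsub : ∀ z w : EuclideanSpace ℝ (Fin 2),
      (inner ℝ (z - w) e : ℝ) = ξ z - ξ w ∧ (inner ℝ (z - w) n : ℝ) = η z - η w := by
    intro z w
    constructor
    · have : z - w = (z - p) - (w - p) := by abel
      rw [this, inner_sub_left]
    · have : z - w = (z - p) - (w - p) := by abel
      rw [this, inner_sub_left]
  have hξp : ξ p = 0 := by simp [hξdef]
  have hηp : η p = 0 := by simp [hηdef]
  have hξp' : ξ p' = d := by
    have : ξ p' = inner ℝ (p' - p) e := rfl
    rw [this, hpe]
  have hηp' : η p' = 0 := by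
    have : η p' = inner ℝ (p' - p) n := rfl
    rw [this, hpn]
  -- inner ℝ products of differences in coordinates
  have innercoord : ∀ z₁ z₂ z₃ z₄ : EuclideanSpace ℝ (Fin 2),
      (inner ℝ (z₁ - z₂) (z₃ - z₄) : ℝ) =
        (ξ z₁ - ξ z₂) * (ξ z₃ - ξ z₄) + (η z₁ - η z₂) * (η z₃ - η z₄) := by
    intro z₁ z₂ z₃ z₄
    rw [IP, (coordsub z₁ z₂).1, (coordsub z₁ z₂).2, (coordsub z₃ z₄).1, (coordsub z₃ z₄).2]
  -- circumcenter
  set T : Affine.Simplex ℝ (EuclideanSpace ℝ (Fin 2)) 2 :=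
    ⟨![p, p', s], affineIndependent_iff_not_collinear_set.2 hncols⟩ with hTdef
  set o : EuclideanSpace ℝ (Fin 2) := T.circumcenter with hodef
  set R : ℝ := T.circumradius with hRdef
  have hop : dist o p = R := by
    rw [dist_comm]
    have := T.dist_circumcenter_eq_circumradius 0
    simpa [hTdef] using this
  have hop' : dist o p' = R := by
    rw [dist_comm]
    have := T.dist_circumcenter_eq_circumradius 1
    simpa [hTdef] using this
  have hos : dist o s = R := by
    rw [dist_comm]
    have := T.dist_circumcenter_eq_circumradius 2
    simpa [hTdef] using this
  have hoq : R < dist o q := hdel o R hop hop' hos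
  -- squared distances
  have distsq : ∀ z w : EuclideanSpace ℝ (Fin 2),
      dist z w ^ 2 = (ξ z - ξ w) ^ 2 + (η z - η w) ^ 2 := by
    intro z w
    rw [dist_eq_norm, ← real_inner_self_eq_norm_sq, innercoord]
    ring
  have hR0 : 0 ≤ R := by rw [← hop]; exact dist_nonneg
  have hsq1 : dist o p ^ 2 = R ^ 2 := by rw [hop]
  have hsq2 : dist o p' ^ 2 = R ^ 2 := by rw [hop']
  have hsq3 : dist o s ^ 2 = R ^ 2 := by rw [hos]
  have hsq4 : R ^ 2 < dist o q ^ 2 := by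
    have := pow_lt_pow_left₀ hoq hR0 (by norm_num : 2 ≠ 0)
    exact this
  rw [distsq] at hsq1 hsq2 hsq3 hsq4
  -- relations
  have hPscoord : (inner ℝ (s - p) (s - p') : ℝ) =
      (ξ s - 0) * (ξ s - d) + (η s - 0) * (η s - 0) := by
    rw [innercoord, hξp, hηp, hξp', hηp']
  have hPqcoord : (inner ℝ (q - p) (q - p') : ℝ) =
      (ξ q - 0) * (ξ q - d) + (η q - 0) * (η q - 0) := by
    rw [innercoord, hξp, hηp, hξp', hηp']
  rw [hPscoord] at hPs
  rw [hPqcoord] at hPq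
  rw [hξp, hηp] at hsq1
  rw [hξp', hηp'] at hsq2
  -- opposite sides: get point c between s and q on the line
  obtain ⟨c, hc, hsbtw⟩ := hopp.exists_sbtw
  have hηc : η c = 0 := by
    have hcp : c -ᵥ p ∈ (affineSpan ℝ ({p, p'} : Set (EuclideanSpace ℝ (Fin 2)))).direction :=
      AffineSubspace.vsub_mem_direction hc (left_mem_affineSpan_pair ℝ p p')
    rw [direction_affineSpan, mem_vectorSpan_pair_rev] at hcp
    obtain ⟨r, hr⟩ := hcp
    rw [vsub_eq_sub, vsub_eq_sub] at hr
    have : η c = inner ℝ (c - p) n := rfl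
    rw [this, ← hr]
    show (inner ℝ (r • (p' -ᵥ p)) n : ℝ) = 0
    rw [real_inner_smul_left]
    have : (p' -ᵥ p : EuclideanSpace ℝ (Fin 2)) = p' - p := rfl
    rw [this, hpn, mul_zero]
  obtain ⟨r, hr01, hrc⟩ := hsbtw.1
  have hηlin : η c = (1 - r) * η s + r * η q := by
    rw [← hrc]
    have hvec : (AffineMap.lineMap s q) r - p = (1 - r) • (s - p) + r • (q - p) := by
      rw [AffineMap.lineMap_apply_module']
      module
    show (inner ℝ ((AffineMap.lineMap s q) r - p) n : ℝ) = _
    rw [hvec, inner_add_left, real_inner_smul_left, real_inner_smul_left]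
  have hr0 : r ≠ 0 := by
    rintro rfl
    exact hsbtw.2.1 (by rw [← hrc, AffineMap.lineMap_apply_zero])
  have hr1 : r ≠ 1 := by
    rintro rfl
    exact hsbtw.2.2 (by rw [← hrc, AffineMap.lineMap_apply_one])
  have hr0' : 0 < r := lt_of_le_of_ne hr01.1 (Ne.symm hr0)
  have hr1' : r < 1 := lt_of_le_of_ne hr01.2 hr1
  -- final contradiction
  have hline : (1 - r) * η s + r * η q = 0 := by rw [← hηlin, hηc]
  exact aux_final hsq1 hsq3 hsq4 hPs hPq hsq2 hd hline hr0' hr1'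
end

section
/- Let θ = π/3. Let p and q be points with q in a cone of apex p of width θ, and let T be the equilateral 'canonical triangle' with apex p contained in that cone whose opposite side passes through q (so q lies on the side ab opposite p, where a and b are the other two corners of T). Then for the corner a of T: |pa| + (θ/sin θ)·|aq| ≤ (1 + θ/sin θ)·|pq|. -/
open Real EuclideanGeometry

/-- Let θ = π/3, let (p,a,b) be the equilateral canonical triangle of p
over q, with q on the side ab opposite p.  Then
|pa| + (θ/sin θ)·|aq| ≤ (1 + θ/sin θ)·|pq|. -/
theorem canonical_triangle_bound
    (p a b q : EuclideanSpace ℝ (Fin 2))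
    (hpa : dist p a = dist a b) (hpb : dist p b = dist a b)
    (hq : q ∈ segment ℝ a b) :
    dist p a + ((π / 3) / Real.sin (π / 3)) * dist a q ≤
      (1 + (π / 3) / Real.sin (π / 3)) * dist p q := by
  set c : ℝ := (π / 3) / Real.sin (π / 3) with hc_def
  have hsin : Real.sin (π / 3) = Real.sqrt 3 / 2 := Real.sin_pi_div_three
  have hsinpos : 0 < Real.sin (π / 3) := by
    rw [hsin]; positivity
  have hc1 : 1 ≤ c := by
    rw [hc_def, le_div_iff₀ hsinpos, one_mul]
    exact Real.sin_le (by positivity)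
  obtain ⟨u, v, hu, hv, huv, hq'⟩ := hq
  set s : ℝ := dist a b with hs_def
  have hs0 : 0 ≤ s := dist_nonneg
  -- t = dist a q = v * s
  have ht : dist a q = v * s := by
    have : a - q = v • (a - b) := by
      rw [← hq']
      have : u = 1 - v := by linarith
      rw [this]
      module
    rw [dist_eq_norm, this, norm_smul, Real.norm_eq_abs, abs_of_nonneg hv,
      ← dist_eq_norm]
  -- inner product fact
  set x : EuclideanSpace ℝ (Fin 2) := p - a with hx_def
  set y : EuclideanSpace ℝ (Fin 2) := b - a with hy_def
  have hnx : ‖x‖ = s := by rw [hx_def, ← dist_eq_norm]; exact hpa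
  have hny : ‖y‖ = s := by rw [hy_def, ← dist_eq_norm, dist_comm]
  have hnxy : ‖x - y‖ = s := by
    have : x - y = p - b := by rw [hx_def, hy_def]; module
    rw [this, ← dist_eq_norm]; exact hpb
  have hinner : inner ℝ x y = s ^ 2 / 2 := by
    have h := @norm_sub_sq_real (EuclideanSpace ℝ (Fin 2)) _ _ x y
    rw [hnx, hny, hnxy] at h
    linarith
  have hd2 : dist p q ^ 2 = s ^ 2 * (1 - v + v ^ 2) := by
    have hpq : p - q = x - v • y := by
      rw [← hq', hx_def, hy_def]
      have : u = 1 - v := by linarith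
      rw [this]; module
    rw [dist_eq_norm, hpq]
    have h := @norm_sub_sq_real (EuclideanSpace ℝ (Fin 2)) _ _ x (v • y)
    rw [h, inner_smul_right, hinner, norm_smul, Real.norm_eq_abs,
      abs_of_nonneg hv, hnx, hny]
    ring
  have hd0 : 0 ≤ dist p q := dist_nonneg
  -- squared inequality
  have hsq : (s + c * (v * s)) ^ 2 ≤ ((1 + c) * dist p q) ^ 2 := by
    have key : ((1 + c) * dist p q) ^ 2 - (s + c * (v * s)) ^ 2
        = s ^ 2 * (1 - v) * (c ^ 2 + 2 * c - (1 + 2 * c) * v) := by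
      rw [mul_pow, hd2]; ring
    have hv1 : v ≤ 1 := by linarith
    have h1 : (0:ℝ) ≤ c ^ 2 + 2 * c - (1 + 2 * c) * v := by nlinarith
    have hprod : 0 ≤ s ^ 2 * (1 - v) * (c ^ 2 + 2 * c - (1 + 2 * c) * v) :=
      mul_nonneg (mul_nonneg (sq_nonneg s) (by linarith)) h1
    linarith
  have hlhs0 : 0 ≤ s + c * (v * s) := by
    have : 0 ≤ c := by linarith
    positivity
  have hrhs0 : 0 ≤ (1 + c) * dist p q := mul_nonneg (by linarith) hd0
  have := Real.sqrt_le_sqrt hsq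
  rw [Real.sqrt_sq hlhs0, Real.sqrt_sq hrhs0] at this
  rw [hpa, ht]
  linarith
end

section
/- Let p and q be points, and let a' be the point such that triangle (p, q, a') is equilateral. Let O be the circle through p, q, a'. Then for every point a on the arc of O on the same side of line pq as a', we have |pa| + |aq| ≤ |pa'| + |a'q| = 2|pq|. -/
open Real EuclideanGeometry

/-- Let (p, q, a') be an equilateral triangle and O the circle through
p, q, a' (center o, radius R).  Then every point a on the arc of O on the same side of
the line pq as a' satisfies |pa| + |aq| ≤ |pa'| + |a'q| = 2|pq|. -/
theorem equilateral_arc_sum_bound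
    (p q a' a o : EuclideanSpace ℝ (Fin 2)) (R : ℝ)
    (hpq : p ≠ q)
    (heq1 : dist p a' = dist p q) (heq2 : dist q a' = dist p q)
    (hop : dist o p = R) (hoq : dist o q = R) (hoa' : dist o a' = R)
    (hoa : dist o a = R)
    (hside : (affineSpan ℝ ({p, q} : Set (EuclideanSpace ℝ (Fin 2)))).SSameSide a a'
      ∨ a = a') :
    dist p a + dist a q ≤ dist p a' + dist a' q ∧
      dist p a' + dist a' q = 2 * dist p q := by
  haveI : Fact (Module.finrank ℝ (EuclideanSpace ℝ (Fin 2)) = 2) :=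
    ⟨finrank_euclideanSpace_fin⟩
  haveI : Module.Oriented ℝ (EuclideanSpace ℝ (Fin 2)) (Fin 2) :=
    ⟨(EuclideanSpace.basisFun (Fin 2) ℝ).toBasis.orientation⟩
  have hd : (0 : ℝ) < dist p q := dist_pos.2 hpq
  have heq : dist p a' + dist a' q = 2 * dist p q := by
    rw [dist_comm a' q, heq1, heq2]; ring
  refine ⟨?_, heq⟩
  rw [heq]
  -- degenerate case a = a'
  rcases hside with hside | rfl
  swap
  · rw [dist_comm a q, heq1, heq2]; linarith
  -- nondegeneracy
  have ha'p : a' ≠ p := by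
    intro h; rw [h, dist_self] at heq1; exact hd.ne heq1
  have ha'q : a' ≠ q := by
    intro h; rw [h, dist_self] at heq2; exact hd.ne heq2
  have hpmem : p ∈ affineSpan ℝ ({p, q} : Set (EuclideanSpace ℝ (Fin 2))) :=
    mem_affineSpan ℝ (by simp)
  have hqmem : q ∈ affineSpan ℝ ({p, q} : Set (EuclideanSpace ℝ (Fin 2))) :=
    mem_affineSpan ℝ (by simp)
  have hanotmem := hside.2.1
  have hap : a ≠ p := fun h => hanotmem (h ▸ hpmem)
  have haq : a ≠ q := fun h => hanotmem (h ▸ hqmem)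
  -- points on the sphere
  set S : EuclideanGeometry.Sphere (EuclideanSpace ℝ (Fin 2)) := ⟨o, R⟩ with hS
  have hpS : p ∈ S := by simpa [S, EuclideanGeometry.mem_sphere, dist_comm] using hop
  have hqS : q ∈ S := by simpa [S, EuclideanGeometry.mem_sphere, dist_comm] using hoq
  have ha'S : a' ∈ S := by simpa [S, EuclideanGeometry.mem_sphere, dist_comm] using hoa'
  have haS : a ∈ S := by simpa [S, EuclideanGeometry.mem_sphere, dist_comm] using hoa
  -- inscribed angle theorem (oriented, mod π)
  have h2 : (2 : ℤ) • ∡ p a q = (2 : ℤ) • ∡ p a' q :=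
    EuclideanGeometry.Sphere.two_zsmul_oangle_eq hpS haS ha'S hqS hap haq ha'p ha'q
  have hcases := Real.Angle.two_zsmul_eq_iff.1 h2
  -- equal signs from the same-side hypothesis
  have hsign := AffineSubspace.SSameSide.oangle_sign_eq hpmem hqmem hside
  -- unoriented angles equal |toReal| of oriented angles
  have habs' : ∠ p a' q = |(∡ p a' q).toReal| :=
    EuclideanGeometry.angle_eq_abs_oangle_toReal ha'p.symm ha'q.symm
  have habs : ∠ p a q = |(∡ p a q).toReal| :=
    EuclideanGeometry.angle_eq_abs_oangle_toReal hap.symm haq.symm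
  -- the apex angle of the equilateral triangle has cosine 1/2
  have hcos' : Real.cos (∠ p a' q) = 1 / 2 := by
    have hl := EuclideanGeometry.law_cos p a' q
    rw [heq1, heq2] at hl
    nlinarith [mul_pos hd hd]
  have hsignne : (∡ p a' q).sign ≠ 0 := by
    intro h0
    rcases Real.Angle.sign_eq_zero_iff.1 h0 with h | h
    · rw [h, Real.Angle.toReal_zero, abs_zero] at habs'
      rw [habs', Real.cos_zero] at hcos'; norm_num at hcos'
    · rw [h, Real.Angle.toReal_pi] at habs'
      rw [habs', abs_of_pos Real.pi_pos, Real.cos_pi] at hcos'; norm_num at hcos'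
  have hθφ : ∡ p a q = ∡ p a' q := by
    rcases hcases with h | h
    · exact h
    · exfalso
      rw [h, Real.Angle.sign_add_pi] at hsign
      apply hsignne
      cases hφ : (∡ p a' q).sign <;> rw [hφ] at hsign <;> simp_all
  -- hence the unoriented angles are equal, so cos ∠ p a q = 1/2
  have hcos : Real.cos (∠ p a q) = 1 / 2 := by
    rw [habs, hθφ, ← habs']; exact hcos'
  -- law of cosines at a, then algebra
  have hl := EuclideanGeometry.law_cos p a q
  rw [hcos] at hl
  have h1 : dist q a = dist a q := dist_comm q a
  rw [h1] at hl
  nlinarith [dist_nonneg (x := p) (y := a), dist_nonneg (x := a) (y := q),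
    sq_nonneg (dist p a - dist a q), hd]
end

section
/- Let θ = π/3. For points p, q with q in a cone of apex p of width θ, let T_pq be the canonical (equilateral) triangle with corners p, a, b and q on segment ab, and let r be a point inside triangle (p, q, a) on segment pr extended to meet line ab at r_q. If there is a path from p to r of length |pr| and a path from r to q of length at most max{|rr_q|, |q_r q|} + (θ/sinθ)|r_q q| (where q_r is the intersection of segment pq with the horizontal line through r), then the total path length from p to q is at most |pa| + (θ/sinθ)|aq|. -/
open Real EuclideanGeometry

private lemma seg_param {V : Type*} [NormedAddCommGroup V] [NormedSpace ℝ V]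
    {x y z : V} (h : z ∈ segment ℝ x y) :
    ∃ t : ℝ, 0 ≤ t ∧ t ≤ 1 ∧ z = x + t • (y - x) := by
  rw [segment_eq_image'] at h
  obtain ⟨t, ⟨h0, h1⟩, ht⟩ := h
  exact ⟨t, h0, h1, ht.symm⟩

set_option maxHeartbeats 1000000 in
/-- Let θ = π/3 and let (p,a,b) be the equilateral canonical triangle of p
over q, with q on segment ab.  Let r ≠ p be a point of the triangle (p,q,a), let r_q be the
point where the ray from p through r meets the line ab, and let q_r be the point of segment
pq on the horizontal line through r (i.e. q_r − r is parallel to b − a).  If there is a path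
from p to r of length |pr| and a path from r to q of length at most
max{|r r_q|, |q_r q|} + (θ/sinθ)|r_q q|, then the total length from p to q is at most
|pa| + (θ/sinθ)|aq|. -/
theorem ideal_path_bound
    (p a b q r rq qr : EuclideanSpace ℝ (Fin 2))
    (hpa : dist p a = dist a b) (hpb : dist p b = dist a b)
    (hq : q ∈ segment ℝ a b)
    (hrp : r ≠ p)
    (hr : r ∈ convexHull ℝ ({p, q, a} : Set (EuclideanSpace ℝ (Fin 2))))
    (hrq1 : Wbtw ℝ p r rq)
    (hrq2 : Collinear ℝ ({a, b, rq} : Set (EuclideanSpace ℝ (Fin 2))))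
    (hqr1 : qr ∈ segment ℝ p q)
    (hqr2 : ∃ c : ℝ, qr - r = c • (b - a)) :
    dist p r + (max (dist r rq) (dist qr q) + ((π / 3) / Real.sin (π / 3)) * dist rq q)
      ≤ dist p a + ((π / 3) / Real.sin (π / 3)) * dist a q := by
  have hsinpos : 0 < Real.sin (π / 3) := by
    rw [Real.sin_pi_div_three]; positivity
  have hK : 1 ≤ (π / 3) / Real.sin (π / 3) := by
    rw [le_div_iff₀ hsinpos, one_mul]
    exact le_of_lt (Real.sin_lt (by positivity))
  by_cases hab : a = b
  · exfalso
    subst hab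
    have hp : p = a := by
      have : dist p a = 0 := by rw [hpa, dist_self]
      exact dist_eq_zero.mp this
    have hqa : q = a := by
      rw [segment_same] at hq; exact hq
    rw [hp, hqa] at hr
    have : ({a, a, a} : Set (EuclideanSpace ℝ (Fin 2))) = {a} := by simp
    rw [this, convexHull_singleton] at hr
    exact hrp (hr.trans hp.symm)
  -- nondegenerate case
  have hba : b - a ≠ 0 := sub_ne_zero.mpr (Ne.symm hab)
  -- linear independence of (a - p) and (b - a)
  have hli : ∀ c₁ c₂ : ℝ, c₁ • (a - p) + c₂ • (b - a) = 0 → c₁ = 0 ∧ c₂ = 0 := by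
    intro c₁ c₂ hc
    by_cases h1 : c₁ = 0
    · refine ⟨h1, ?_⟩
      rw [h1, zero_smul, zero_add, smul_eq_zero] at hc
      exact hc.resolve_right hba
    · exfalso
      have hap : a - p = (-(c₂ / c₁)) • (b - a) := by
        refine smul_right_injective _ h1 ?_
        show c₁ • (a - p) = c₁ • (-(c₂ / c₁) • (b - a))
        rw [smul_smul, show c₁ * -(c₂ / c₁) = -c₂ by field_simp, neg_smul]
        exact eq_neg_of_add_eq_zero_left hc
      set c : ℝ := -(c₂ / c₁)
      have e1 : ‖a - p‖ = ‖b - a‖ := by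
        rw [norm_sub_rev a p, norm_sub_rev b a, ← dist_eq_norm, ← dist_eq_norm, hpa]
      have hbn : ‖b - a‖ ≠ 0 := norm_ne_zero_iff.mpr hba
      have e2 : |c| = 1 := by
        rw [hap, norm_smul, Real.norm_eq_abs] at e1
        exact mul_right_cancel₀ hbn (by rw [one_mul]; exact e1)
      have e3 : b - p = (1 + c) • (b - a) := by
        rw [add_smul, one_smul, ← hap]; abel
      have e4 : |1 + c| = 1 := by
        have e1' : ‖b - p‖ = ‖b - a‖ := by
          rw [norm_sub_rev b p, norm_sub_rev b a, ← dist_eq_norm, ← dist_eq_norm, hpb]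
        rw [e3, norm_smul, Real.norm_eq_abs] at e1'
        exact mul_right_cancel₀ hbn (by rw [one_mul]; exact e1')
      rcases (abs_eq (zero_le_one)).mp e2 with h | h <;> rw [h] at e4 <;> norm_num at e4
  -- decompositions
  obtain ⟨lam, hlam0, hlam1, hqe⟩ := seg_param hq
  rw [convexHull_insert (by simp : ({q, a} : Set (EuclideanSpace ℝ (Fin 2))).Nonempty),
    convexHull_pair] at hr
  rw [mem_convexJoin] at hr
  obtain ⟨x, hx, z, hz, hrseg⟩ := hr
  rw [Set.mem_singleton_iff] at hx
  rw [hx] at hrseg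
  obtain ⟨m, hm0, hm1, hre⟩ := seg_param hrseg
  obtain ⟨w, hw0, hw1, hze⟩ := seg_param hz
  have hzₑ : z = a + ((1 - w) * lam) • (b - a) := by
    rw [hze, hqe]; module
  have hm0' : m ≠ 0 := by
    intro h
    apply hrp
    rw [hre, h, zero_smul, add_zero]
  -- rq on line ab
  have hrqline : ∃ u : ℝ, rq = a + u • (b - a) := by
    have h1 : rq ∈ line[ℝ, a, b] :=
      hrq2.mem_affineSpan_of_mem_of_ne (Set.mem_insert _ _)
        (Set.mem_insert_of_mem _ (Set.mem_insert _ _))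
        (Set.mem_insert_of_mem _ (Set.mem_insert_of_mem _ rfl)) hab
    rw [show rq = (rq -ᵥ a) +ᵥ a from (vsub_vadd _ _).symm, vadd_left_mem_affineSpan_pair] at h1
    obtain ⟨u, hu⟩ := h1
    have hu' : rq - a = u • (b - a) := by simpa [vsub_eq_sub] using hu.symm
    exact ⟨u, by rw [← hu']; abel⟩
  obtain ⟨u, hrqe⟩ := hrqline
  obtain ⟨s, hs0, hs1, hre2⟩ := seg_param hrq1.mem_segment
  -- identify rq with z
  have key1 : (s - m) • (a - p) + (s * u - m * ((1 - w) * lam)) • (b - a) = 0 := by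
    have h0 : s • (rq - p) = m • (z - p) := by
      have := hre2.symm.trans hre
      have h' : p + s • (rq - p) = p + m • (z - p) := this
      exact add_left_cancel h'
    rw [hrqe, hzₑ] at h0
    have := h0
    linear_combination (norm := module) this
  obtain ⟨hsm, hsu⟩ := hli _ _ key1
  have hsm' : s = m := by linarith
  have hu' : u = (1 - w) * lam := by
    refine mul_left_cancel₀ hm0' ?_
    have : m * u - m * ((1 - w) * lam) = 0 := by rw [← hsm'] at hsu ⊢; linarith
    linarith
  have hrqz : rq = z := by rw [hrqe, hzₑ, hu']
  -- identify qr
  obtain ⟨sig, hsig0, hsig1, hqre⟩ := seg_param hqr1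
  obtain ⟨c, hc⟩ := hqr2
  have key2 : (sig - m) • (a - p) + (sig * lam - m * ((1 - w) * lam) - c) • (b - a) = 0 := by
    rw [hqre, hre, hzₑ, hqe] at hc
    linear_combination (norm := module) hc
  obtain ⟨hsigm, -⟩ := hli _ _ key2
  have hsig : sig = m := by linarith
  -- distance computations
  have dpq_le : dist p q ≤ dist p a := by
    have hq' : q - p = (1 - lam) • (a - p) + lam • (b - p) := by rw [hqe]; module
    calc dist p q = ‖q - p‖ := by rw [dist_eq_norm, norm_sub_rev]
    _ ≤ (1 - lam) * ‖a - p‖ + lam * ‖b - p‖ := by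
        rw [hq']
        refine (norm_add_le _ _).trans ?_
        rw [norm_smul, norm_smul, Real.norm_eq_abs, Real.norm_eq_abs,
          abs_of_nonneg (by linarith : (0:ℝ) ≤ 1 - lam), abs_of_nonneg hlam0]
    _ = (1 - lam) * dist p a + lam * dist p b := by
        rw [dist_eq_norm, dist_eq_norm, norm_sub_rev a p, norm_sub_rev b p]
    _ ≤ dist p a := by rw [hpa, hpb]; nlinarith [dist_nonneg (x := p) (y := a), hpa]
  have dpz_le : ‖z - p‖ ≤ (1 - w) * dist p q + w * dist p a := by
    have hz' : z - p = (1 - w) • (q - p) + w • (a - p) := by rw [hze]; module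
    rw [hz']
    refine (norm_add_le _ _).trans ?_
    rw [norm_smul, norm_smul, Real.norm_eq_abs, Real.norm_eq_abs,
      abs_of_nonneg (by linarith : (0:ℝ) ≤ 1 - w), abs_of_nonneg hw0,
      dist_eq_norm, dist_eq_norm, norm_sub_rev p q, norm_sub_rev p a]
  have dpr : dist p r = m * ‖z - p‖ := by
    rw [dist_eq_norm, norm_sub_rev, hre, add_sub_cancel_left, norm_smul,
      Real.norm_eq_abs, abs_of_nonneg hm0]
  have dsum : dist p r + dist r rq = ‖z - p‖ := by
    rw [hrq1.dist_add_dist, hrqz, dist_eq_norm, norm_sub_rev]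
  have dqrq : dist qr q = (1 - m) * dist p q := by
    have hqq : qr - q = -((1 - m) • (q - p)) := by rw [hqre, hsig]; module
    rw [dist_eq_norm, hqq, norm_neg, norm_smul, Real.norm_eq_abs,
      abs_of_nonneg (by linarith : (0:ℝ) ≤ 1 - m), dist_eq_norm, norm_sub_rev p q]
  have drqq : dist rq q ≤ dist a q := by
    have hh : rq - q = w • (a - q) := by rw [hrqz, hze]; module
    rw [dist_eq_norm, hh, norm_smul, Real.norm_eq_abs, abs_of_nonneg hw0, dist_eq_norm]
    nlinarith [norm_nonneg (a - q)]
  -- put it together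
  have f1 : dist p r + dist r rq ≤ dist p a := by
    rw [dsum]
    refine dpz_le.trans ?_
    nlinarith [dist_nonneg (x := p) (y := a)]
  have f2 : dist p r + dist qr q ≤ dist p a := by
    rw [dpr, dqrq]
    have h1 : m * ‖z - p‖ ≤ m * ((1 - w) * dist p q + w * dist p a) :=
      mul_le_mul_of_nonneg_left dpz_le hm0
    nlinarith [dist_nonneg (x := p) (y := q)]
  have fmax : dist p r + max (dist r rq) (dist qr q) ≤ dist p a := by
    rcases max_cases (dist r rq) (dist qr q) with ⟨h, -⟩ | ⟨h, -⟩ <;> rw [h]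
    exacts [f1, f2]
  have fK : ((π / 3) / Real.sin (π / 3)) * dist rq q ≤ ((π / 3) / Real.sin (π / 3)) * dist a q :=
    mul_le_mul_of_nonneg_left drqq (by linarith)
  linarith
end
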